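/- arXiv:2504.00182 — 3 statements merged into one kernel-verified Lean document; each statement's English description precedes it below -/
import Mathlib

section
/- Let φ : ℝ → ℝ be measurable and ξ_φ(x) = (cos φ(x), sin φ(x))ᵀ. For s < t with φ integrable appropriately, define Ω(s,t) = ∫_s^t ξ_{φ(x)} ξ_{φ(x)}ᵀ dx. Then det Ω(s,t) = (1/2) ∫_s^t ∫_s^t sin²(φ(x) − φ(y)) dx dy. -/
/-!
`Ω(s,t)` is the Gram matrix of `cos ∘ φ` and `sin ∘ φ` in `L²(s,t)`, so its determinant is given
by the continuous form of Lagrange's identity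
`(∫ f²)(∫ g²) - (∫ f g)² = ½ ∫∫ (f(x) g(y) - g(x) f(y))²`,
and for `f = sin ∘ φ`, `g = cos ∘ φ` the integrand is `sin² (φ x - φ y)`.
-/

open MeasureTheory Real

section Lagrange

variable {α : Type*} [MeasurableSpace α] {μ : Measure α} {f g : α → ℝ}

theorem integral_mul_sub_mul_sq (hf : Integrable (fun y => f y ^ 2) μ)
    (hg : Integrable (fun y => g y ^ 2) μ) (hfg : Integrable (fun y => f y * g y) μ) (a b : ℝ) :
    ∫ y, (a * g y - b * f y) ^ 2 ∂μ =
      a ^ 2 * ∫ y, g y ^ 2 ∂μ - 2 * a * b * ∫ y, f y * g y ∂μ + b ^ 2 * ∫ y, f y ^ 2 ∂μ := by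
  have expand : ∀ y, (a * g y - b * f y) ^ 2 =
      a ^ 2 * g y ^ 2 - 2 * a * b * (f y * g y) + b ^ 2 * f y ^ 2 := fun y => by ring
  simp only [expand]
  rw [integral_add, integral_sub, integral_const_mul, integral_const_mul, integral_const_mul]
  all_goals fun_prop

theorem integral_sq_mul_integral_sq_sub_sq_integral_mul (hf : Integrable (fun y => f y ^ 2) μ)
    (hg : Integrable (fun y => g y ^ 2) μ) (hfg : Integrable (fun y => f y * g y) μ) :
    (∫ x, f x ^ 2 ∂μ) * (∫ x, g x ^ 2 ∂μ) - (∫ x, f x * g x ∂μ) ^ 2 =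
      1 / 2 * ∫ x, ∫ y, (f x * g y - g x * f y) ^ 2 ∂μ ∂μ := by
  have expand : ∀ x, ∫ y, (f x * g y - g x * f y) ^ 2 ∂μ =
      f x ^ 2 * (∫ y, g y ^ 2 ∂μ) - f x * g x * (2 * ∫ y, f y * g y ∂μ)
        + g x ^ 2 * ∫ y, f y ^ 2 ∂μ := fun x => by
    rw [integral_mul_sub_mul_sq hf hg hfg]; ring
  simp only [expand]
  rw [integral_add, integral_sub, integral_mul_const, integral_mul_const, integral_mul_const]
  · ring
  all_goals fun_prop

end Lagrange

theorem integrable_comp_of_abs_le {α : Type*} [MeasurableSpace α] {μ : Measure α}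
    [IsFiniteMeasure μ] {u : ℝ → ℝ} {C : ℝ} (hu : Measurable u) (hbdd : ∀ z, |u z| ≤ C)
    {φ : α → ℝ} (hφ : Measurable φ) : Integrable (fun x => u (φ x)) μ :=
  .of_bound (hu.comp hφ).aestronglyMeasurable C (.of_forall fun x => hbdd (φ x))

/-- For a rank-one Hamiltonian `H(x) = ξ_{φ(x)} ξ_{φ(x)}ᵀ` with
`ξ_φ = (cos φ, sin φ)ᵀ`, the determinant of the entrywise integral
`Ω(s,t) = ∫_s^t H(x) dx` equals
`(1/2) ∫_s^t ∫_s^t sin²(φ(x) − φ(y)) dx dy`. -/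
theorem det_omega_eq_double_integral_sin_sq
    (φ : ℝ → ℝ) (hφ : Measurable φ) (s t : ℝ) (hst : s < t)
    (Ω : ℝ → ℝ → Matrix (Fin 2) (Fin 2) ℝ)
    (hΩ : ∀ s t, Ω s t = Matrix.of fun i j =>
      ∫ x in s..t, (![Real.cos (φ x), Real.sin (φ x)] i) *
        (![Real.cos (φ x), Real.sin (φ x)] j)) :
    (Ω s t).det =
      (1 / 2) * ∫ x in s..t, ∫ y in s..t, Real.sin (φ x - φ y) ^ 2 := by
  have hbdd (z : ℝ) : |sin z ^ 2| ≤ 1 ∧ |cos z ^ 2| ≤ 1 ∧ |sin z * cos z| ≤ 1 := by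
    refine ⟨?_, ?_, ?_⟩ <;> simp only [abs_pow, abs_mul]
    · exact pow_le_one₀ (abs_nonneg _) (abs_sin_le_one z)
    · exact pow_le_one₀ (abs_nonneg _) (abs_cos_le_one z)
    · exact mul_le_one₀ (abs_sin_le_one z) (abs_nonneg _) (abs_cos_le_one z)
  have lagrange := integral_sq_mul_integral_sq_sub_sq_integral_mul
    (μ := volume.restrict (Set.Ioc s t))
    (f := fun x => sin (φ x)) (g := fun x => cos (φ x))
    (integrable_comp_of_abs_le (by fun_prop) (fun z => (hbdd z).1) hφ)
    (integrable_comp_of_abs_le (by fun_prop) (fun z => (hbdd z).2.1) hφ)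
    (integrable_comp_of_abs_le (by fun_prop) (fun z => (hbdd z).2.2) hφ)
  simp only [← sin_sub] at lagrange
  simp only [intervalIntegral.integral_of_le hst.le, hΩ, Matrix.det_fin_two, Matrix.of_apply,
    ← lagrange]
  simp only [Matrix.cons_val_zero, Matrix.cons_val_one, ← sq, mul_comm (cos _) (sin _)]
  ring
end

section
/- Let g : [1,∞) → (0,∞) be measurable, locally integrable, and regularly varying with index α > −1, i.e. g(λr)/g(r) → λ^α for every λ > 0 as r → ∞. Then lim_{x→∞} x·g(x) / ∫_1^x g(t) dt = α + 1. -/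
/-!
Write `G x = ∫₁ˣ g` and `R x = x g(x) / G(x)`. Comparing `λ g(λs)` with `λ^(α+1) g(s)` under the
integral shows first that `G` grows geometrically along `x, 2x, 4x, …`, so `G → ∞`, and then that
`G(λx) / G(x) → λ^(α+1)`.

For `x > 1` the functions `s ↦ x g(sx) / G(x) = R(x) · g(sx) / g(x)` on `(1, 2]` have integral
`G(2x) / G(x) - 1 → 2^(α+1) - 1`, while `g(sx) / g(x) → s^α` pointwise and
`∫₁² s^α ds = (2^(α+1) - 1) / (α+1)`. Along a sequence on which `R ≥ c`, Fatou's lemma therefore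
gives `c ≤ α + 1`; along one on which `R ≤ c`, the reverse Fatou lemma gives `α + 1 ≤ c`, the
domination coming from the upper bound on `R` just obtained. This avoids the uniform convergence
theorem for regularly varying functions.
-/

open MeasureTheory Filter Set Topology

theorem MonotoneOn.tendsto_atTop_of_le_comp_mul {f : ℝ → ℝ} {a lam c : ℝ} (ha : 0 ≤ a)
    (hlam : 1 ≤ lam) (hc : 1 < c) (hmono : MonotoneOn f (Ici a)) (hfa : 0 < f a)
    (hgrowth : ∀ x ≥ a, c * f x ≤ f (lam * x)) : Tendsto f atTop atTop := by
  have hge : ∀ n : ℕ, a ≤ lam ^ n * a := fun n =>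
    le_mul_of_one_le_left ha (one_le_pow₀ hlam)
  have hpow : ∀ n : ℕ, c ^ n * f a ≤ f (lam ^ n * a) := by
    intro n
    induction n with
    | zero => simp
    | succ n ih =>
      calc c ^ (n + 1) * f a = c * (c ^ n * f a) := by ring
        _ ≤ c * f (lam ^ n * a) := by gcongr
        _ ≤ f (lam * (lam ^ n * a)) := hgrowth _ (hge n)
        _ = f (lam ^ (n + 1) * a) := by rw [pow_succ', mul_assoc]
  refine tendsto_atTop_atTop.2 fun M => ?_
  obtain ⟨n, hn⟩ :=
    ((tendsto_pow_atTop_atTop_of_one_lt hc).atTop_mul_const hfa).eventually_ge_atTop M |>.exists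
  exact ⟨lam ^ n * a, fun x hx =>
    hn.trans ((hpow n).trans (hmono (hge n) ((hge n).trans hx) hx))⟩

theorem abs_integral_sub_const_mul_le {f₁ f₂ : ℝ → ℝ} {a T x k δ : ℝ} (haT : a ≤ T)
    (hTx : T ≤ x) (hδ : 0 ≤ δ) (hf₁ : ∀ y ≥ a, IntervalIntegrable f₁ volume a y)
    (hf₂ : ∀ y ≥ a, IntervalIntegrable f₂ volume a y) (hnonneg : ∀ t ≥ a, 0 ≤ f₂ t)
    (hclose : ∀ t ≥ T, |f₁ t - k * f₂ t| ≤ δ * f₂ t) :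
    |(∫ t in a..x, f₁ t) - k * ∫ t in a..x, f₂ t| ≤
      |∫ t in a..T, (f₁ t - k * f₂ t)| + δ * ∫ t in a..x, f₂ t := by
  have hax := haT.trans hTx
  have hdiff : ∀ y ≥ a, IntervalIntegrable (fun t => f₁ t - k * f₂ t) volume a y :=
    fun y hy => (hf₁ y hy).sub ((hf₂ y hy).const_mul k)
  have hf₂Tx : IntervalIntegrable f₂ volume T x := (hf₂ T haT).symm.trans (hf₂ x hax)
  have hsplit : (∫ t in a..x, f₁ t) - k * ∫ t in a..x, f₂ t =
      (∫ t in a..T, (f₁ t - k * f₂ t)) + ∫ t in T..x, (f₁ t - k * f₂ t) := by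
    rw [intervalIntegral.integral_add_adjacent_intervals (hdiff T haT)
        ((hdiff T haT).symm.trans (hdiff x hax)),
      intervalIntegral.integral_sub (hf₁ x hax) ((hf₂ x hax).const_mul k),
      intervalIntegral.integral_const_mul]
  have htail : |∫ t in T..x, (f₁ t - k * f₂ t)| ≤ δ * ∫ t in T..x, f₂ t := by
    rw [← intervalIntegral.integral_const_mul]
    simpa only [Real.norm_eq_abs] using intervalIntegral.norm_integral_le_of_norm_le
      (f := fun t => f₁ t - k * f₂ t) hTx (ae_of_all _ fun t ht => hclose t ht.1.le)
      (hf₂Tx.const_mul δ)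
  have hhead : 0 ≤ ∫ t in a..T, f₂ t :=
    intervalIntegral.integral_nonneg haT fun t ht => hnonneg t ht.1
  rw [hsplit, ← intervalIntegral.integral_add_adjacent_intervals (hf₂ T haT) hf₂Tx]
  calc _ ≤ |∫ t in a..T, (f₁ t - k * f₂ t)| + |∫ t in T..x, (f₁ t - k * f₂ t)| := abs_add_le _ _
    _ ≤ _ := by rw [mul_add]; linarith [mul_nonneg hδ hhead]

theorem tendsto_integral_div_integral_of_tendsto_div {f₁ f₂ : ℝ → ℝ} {a k : ℝ}
    (hf₁ : ∀ x ≥ a, IntervalIntegrable f₁ volume a x)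
    (hf₂ : ∀ x ≥ a, IntervalIntegrable f₂ volume a x) (hpos : ∀ x ≥ a, 0 < f₂ x)
    (hlim : Tendsto (fun x => f₁ x / f₂ x) atTop (𝓝 k))
    (htop : Tendsto (fun x => ∫ t in a..x, f₂ t) atTop atTop) :
    Tendsto (fun x => (∫ t in a..x, f₁ t) / ∫ t in a..x, f₂ t) atTop (𝓝 k) := by
  refine Metric.tendsto_nhds.2 fun ε hε => ?_
  obtain ⟨T, hT⟩ := eventually_atTop.1
    ((Metric.tendsto_nhds.1 hlim (ε / 2) (half_pos hε)).and (eventually_ge_atTop a))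
  have hTa : a ≤ T := (hT T le_rfl).2
  have hclose : ∀ t ≥ T, |f₁ t - k * f₂ t| ≤ ε / 2 * f₂ t := by
    intro t ht
    have h₂ := hpos t (hT t ht).2
    have h := (hT t ht).1
    rw [Real.dist_eq, ← mul_lt_mul_iff_of_pos_right h₂, ← abs_of_pos h₂, ← abs_mul,
      abs_of_pos h₂, sub_mul, div_mul_cancel₀ _ h₂.ne'] at h
    exact h.le
  set C := |∫ t in a..T, (f₁ t - k * f₂ t)|
  filter_upwards [htop.eventually_gt_atTop (2 * C / ε), htop.eventually_gt_atTop 0,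
    eventually_ge_atTop T] with x hbig hF hx
  have hest := abs_integral_sub_const_mul_le hTa hx (half_pos hε).le hf₁ hf₂
    (fun t ht => (hpos t ht).le) hclose
  rw [div_lt_iff₀ hε] at hbig
  rw [Real.dist_eq, div_sub' hF.ne', abs_div, abs_of_pos hF, div_lt_iff₀ hF, mul_comm _ k]
  linarith

theorem lintegral_ofReal_const_mul_rpow {α c lam : ℝ} (hα : -1 < α) (hc : 0 ≤ c)
    (hlam : 1 ≤ lam) :
    ∫⁻ s in Ioc 1 lam, ENNReal.ofReal (c * s ^ α) =
      ENNReal.ofReal (c / (α + 1) * (lam ^ (α + 1) - 1)) := by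
  have hint : IntervalIntegrable (fun s : ℝ => c * s ^ α) volume 1 lam :=
    (intervalIntegral.intervalIntegrable_rpow' hα).const_mul c
  rw [← ofReal_integral_eq_lintegral_ofReal
    ((intervalIntegrable_iff_integrableOn_Ioc_of_le hlam).1 hint)
    (ae_restrict_of_forall_mem measurableSet_Ioc fun s hs =>
      mul_nonneg hc (Real.rpow_nonneg (by linarith [hs.1]) α)),
    ← intervalIntegral.integral_of_le hlam, intervalIntegral.integral_const_mul,
    integral_rpow (Or.inl hα), Real.one_rpow]
  ring_nf

def IsRegularlyVarying (g : ℝ → ℝ) (α : ℝ) : Prop :=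
  ∀ lam : ℝ, 0 < lam → Tendsto (fun r => g (lam * r) / g r) atTop (𝓝 (lam ^ α))

section PositiveOnHalfLine

variable {g : ℝ → ℝ}

theorem intervalIntegrable_of_one_le (hint : ∀ x ≥ (1 : ℝ), IntervalIntegrable g volume 1 x)
    {a b : ℝ} (ha : 1 ≤ a) (hb : 1 ≤ b) : IntervalIntegrable g volume a b :=
  (hint a ha).symm.trans (hint b hb)

theorem intervalIntegrable_comp_mul_left (hint : ∀ x ≥ (1 : ℝ), IntervalIntegrable g volume 1 x)
    {lam a b : ℝ} (hlam : 0 < lam) (ha : 1 ≤ lam * a) (hb : 1 ≤ lam * b) :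
    IntervalIntegrable (fun s => g (lam * s)) volume a b := by
  simpa [hlam.ne'] using (intervalIntegrable_of_one_le hint ha hb).comp_mul_left (c := lam)

theorem integral_comp_mul_left_eq_sub (hint : ∀ x ≥ (1 : ℝ), IntervalIntegrable g volume 1 x)
    {lam a b : ℝ} (ha : 1 ≤ lam * a) (hb : 1 ≤ lam * b) :
    ∫ s in a..b, lam * g (lam * s) =
      (∫ t in (1 : ℝ)..lam * b, g t) - ∫ t in (1 : ℝ)..lam * a, g t := by
  rw [intervalIntegral.integral_const_mul, ← smul_eq_mul,
    intervalIntegral.smul_integral_comp_mul_left,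
    intervalIntegral.integral_interval_sub_left (hint _ hb) (hint _ ha)]

theorem integral_one_pos (hpos : ∀ r ≥ (1 : ℝ), 0 < g r)
    (hint : ∀ x ≥ (1 : ℝ), IntervalIntegrable g volume 1 x) {x : ℝ} (hx : 1 < x) :
    0 < ∫ t in (1 : ℝ)..x, g t :=
  intervalIntegral.intervalIntegral_pos_of_pos_on (hint x hx.le) (fun t ht => hpos t ht.1.le) hx

theorem strictMonoOn_integral_one (hpos : ∀ r ≥ (1 : ℝ), 0 < g r)
    (hint : ∀ x ≥ (1 : ℝ), IntervalIntegrable g volume 1 x) :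
    StrictMonoOn (fun x => ∫ t in (1 : ℝ)..x, g t) (Ici 1) := by
  intro a ha b hb hab
  rw [← sub_pos, intervalIntegral.integral_interval_sub_left (hint b hb) (hint a ha)]
  exact intervalIntegral.intervalIntegral_pos_of_pos_on (intervalIntegrable_of_one_le hint ha hb)
    (fun t ht => hpos t (le_trans ha ht.1.le)) hab

theorem rescaled_eq_ratio_mul {x : ℝ} (hx : g x ≠ 0) (s : ℝ) :
    x * g (s * x) / (∫ t in (1 : ℝ)..x, g t) =
      x * g x / (∫ t in (1 : ℝ)..x, g t) * (g (s * x) / g x) := by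
  rw [div_mul_div_comm, mul_right_comm, mul_div_mul_right _ _ hx]

theorem lintegral_rescaled (hpos : ∀ r ≥ (1 : ℝ), 0 < g r)
    (hint : ∀ x ≥ (1 : ℝ), IntervalIntegrable g volume 1 x) {lam x : ℝ} (hlam : 1 ≤ lam)
    (hx : 1 < x) :
    ∫⁻ s in Ioc 1 lam, ENNReal.ofReal (x * g (s * x) / ∫ t in (1 : ℝ)..x, g t) =
      ENNReal.ofReal ((∫ t in (1 : ℝ)..lam * x, g t) / (∫ t in (1 : ℝ)..x, g t) - 1) := by
  have hG := integral_one_pos hpos hint hx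
  have hcomm : (fun s => x * g (s * x)) = fun s => x * g (x * s) := by simp only [mul_comm _ x]
  have hsub : ∫ s in (1 : ℝ)..lam, x * g (s * x) =
      (∫ t in (1 : ℝ)..lam * x, g t) - ∫ t in (1 : ℝ)..x, g t := by
    rw [hcomm, integral_comp_mul_left_eq_sub hint (by linarith) (by nlinarith), mul_one,
      mul_comm x]
  have hint' : IntervalIntegrable (fun s => x * g (s * x)) volume 1 lam := by
    rw [hcomm]
    exact (intervalIntegrable_comp_mul_left hint (by linarith) (by linarith)
      (by nlinarith)).const_mul x
  rw [← ofReal_integral_eq_lintegral_ofReal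
    ((intervalIntegrable_iff_integrableOn_Ioc_of_le hlam).1 (hint'.div_const _))
    (ae_restrict_of_forall_mem measurableSet_Ioc fun s hs =>
      div_nonneg (mul_nonneg (by linarith) (hpos _ (by nlinarith [hs.1])).le) hG.le),
    ← intervalIntegral.integral_of_le hlam, intervalIntegral.integral_div, hsub, sub_div,
    div_self hG.ne']

end PositiveOnHalfLine

namespace IsRegularlyVarying

variable {g : ℝ → ℝ} {α : ℝ}

theorem exists_mul_sub_le_sub_comp_mul (hrv : IsRegularlyVarying g α)
    (hpos : ∀ r ≥ (1 : ℝ), 0 < g r) (hint : ∀ x ≥ (1 : ℝ), IntervalIntegrable g volume 1 x)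
    {lam c : ℝ} (hlam : 1 ≤ lam) (hc : c < lam ^ (α + 1)) :
    ∃ T ≥ 1, ∀ x ≥ T, c * ((∫ t in (1 : ℝ)..x, g t) - ∫ t in (1 : ℝ)..T, g t) ≤
      (∫ t in (1 : ℝ)..lam * x, g t) - ∫ t in (1 : ℝ)..lam * T, g t := by
  have hlam0 : 0 < lam := by linarith
  have hc' : c / lam < lam ^ α := by
    rwa [div_lt_iff₀ hlam0, ← Real.rpow_add_one hlam0.ne']
  obtain ⟨T, hT⟩ := eventually_atTop.1
    (((hrv lam hlam0).eventually (lt_mem_nhds hc')).and (eventually_ge_atTop 1))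
  have hT1 : 1 ≤ T := (hT T le_rfl).2
  refine ⟨T, hT1, fun x hx => ?_⟩
  have hpointwise : ∀ s ∈ Icc T x, c * g s ≤ lam * g (lam * s) := by
    intro s hs
    have h := (hT s hs.1).1
    rw [div_lt_div_iff₀ hlam0 (hpos s (hT s hs.1).2)] at h
    linarith
  calc c * ((∫ t in (1 : ℝ)..x, g t) - ∫ t in (1 : ℝ)..T, g t) = ∫ s in T..x, c * g s := by
        rw [intervalIntegral.integral_const_mul,
          intervalIntegral.integral_interval_sub_left (hint x (hT1.trans hx)) (hint T hT1)]
    _ ≤ ∫ s in T..x, lam * g (lam * s) :=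
        intervalIntegral.integral_mono_on hx
          ((intervalIntegrable_of_one_le hint hT1 (hT1.trans hx)).const_mul c)
          ((intervalIntegrable_comp_mul_left hint hlam0 (by nlinarith) (by nlinarith)).const_mul
            lam)
          hpointwise
    _ = _ := integral_comp_mul_left_eq_sub hint (by nlinarith) (by nlinarith)

theorem tendsto_integral_atTop (hrv : IsRegularlyVarying g α) (hα : -1 < α)
    (hpos : ∀ r ≥ (1 : ℝ), 0 < g r) (hint : ∀ x ≥ (1 : ℝ), IntervalIntegrable g volume 1 x) :
    Tendsto (fun x => ∫ t in (1 : ℝ)..x, g t) atTop atTop := by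
  set G := fun x => ∫ t in (1 : ℝ)..x, g t
  obtain ⟨c, hc, hc2⟩ := exists_between (Real.one_lt_rpow one_lt_two (by linarith : 0 < α + 1))
  obtain ⟨T, hT1, hgrowth⟩ := hrv.exists_mul_sub_le_sub_comp_mul hpos hint one_le_two hc2
  have hmono := strictMonoOn_integral_one hpos hint
  have hT2T : G T < G (2 * T) := hmono (mem_Ici.2 hT1) (mem_Ici.2 (by linarith)) (by linarith)
  have htail : Tendsto (fun x => G x - G T) atTop atTop := by
    refine MonotoneOn.tendsto_atTop_of_le_comp_mul (a := 2 * T) (by linarith) one_le_two hc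
      (fun a ha b hb hab => ?_) (sub_pos.2 hT2T) fun x hx => ?_
    · exact sub_le_sub_right (hmono.monotoneOn (mem_Ici.2 (by linarith [mem_Ici.1 ha]))
        (mem_Ici.2 (by linarith [mem_Ici.1 hb])) hab) _
    · linarith [hgrowth x (by linarith)]
  simpa using tendsto_atTop_add_const_right _ (G T) htail

theorem tendsto_integral_comp_mul_div (hrv : IsRegularlyVarying g α) (hα : -1 < α)
    (hpos : ∀ r ≥ (1 : ℝ), 0 < g r) (hint : ∀ x ≥ (1 : ℝ), IntervalIntegrable g volume 1 x)
    {lam : ℝ} (hlam : 1 ≤ lam) :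
    Tendsto (fun x => (∫ t in (1 : ℝ)..lam * x, g t) / ∫ t in (1 : ℝ)..x, g t) atTop
      (𝓝 (lam ^ (α + 1))) := by
  have hlam0 : 0 < lam := by linarith
  have htop := hrv.tendsto_integral_atTop hα hpos hint
  have hmain : Tendsto (fun x => (∫ s in (1 : ℝ)..x, lam * g (lam * s)) / ∫ t in (1 : ℝ)..x, g t)
      atTop (𝓝 (lam * lam ^ α)) :=
    tendsto_integral_div_integral_of_tendsto_div
      (fun x hx => (intervalIntegrable_comp_mul_left hint hlam0 (by nlinarith)
        (by nlinarith)).const_mul lam)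
      hint hpos ((hrv lam hlam0).const_mul lam |>.congr fun x => (mul_div_assoc _ _ _).symm) htop
  have hconst := (tendsto_const_nhds (x := ∫ t in (1 : ℝ)..lam, g t)).div_atTop htop
  rw [Real.rpow_add_one hlam0.ne', mul_comm, ← add_zero (lam * lam ^ α)]
  refine (hmain.add hconst).congr' ?_
  filter_upwards [eventually_ge_atTop 1] with x hx
  rw [← add_div, integral_comp_mul_left_eq_sub hint (by nlinarith) (by nlinarith), mul_one,
    sub_add_cancel]

theorem tendsto_lintegral_rescaled (hrv : IsRegularlyVarying g α) (hα : -1 < α)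
    (hpos : ∀ r ≥ (1 : ℝ), 0 < g r) (hint : ∀ x ≥ (1 : ℝ), IntervalIntegrable g volume 1 x)
    {lam : ℝ} (hlam : 1 ≤ lam) :
    Tendsto (fun x => ∫⁻ s in Ioc 1 lam, ENNReal.ofReal (x * g (s * x) / ∫ t in (1 : ℝ)..x, g t))
      atTop (𝓝 (ENNReal.ofReal (lam ^ (α + 1) - 1))) := by
  refine ((ENNReal.continuous_ofReal.tendsto _).comp
    ((hrv.tendsto_integral_comp_mul_div hα hpos hint hlam).sub_const 1)).congr' ?_
  filter_upwards [eventually_gt_atTop 1] with x hx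
  exact (lintegral_rescaled hpos hint hlam hx).symm

theorem le_add_one_of_le_ratio_seq (hrv : IsRegularlyVarying g α) (hα : -1 < α)
    (hpos : ∀ r ≥ (1 : ℝ), 0 < g r) (hmeas : Measurable g)
    (hint : ∀ x ≥ (1 : ℝ), IntervalIntegrable g volume 1 x)
    {u : ℕ → ℝ} (hu : Tendsto u atTop atTop) (hu1 : ∀ n, 1 < u n) {c : ℝ} (hc : 0 ≤ c)
    (hcu : ∀ n, c ≤ u n * g (u n) / ∫ t in (1 : ℝ)..u n, g t) : c ≤ α + 1 := by
  set F : ℕ → ℝ → ENNReal := fun n s => ENNReal.ofReal (c * (g (s * u n) / g (u n)))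
  have hF_meas : ∀ n, Measurable (F n) := fun n => by fun_prop
  have hF_lim : ∀ s ∈ Ioc (1 : ℝ) 2, liminf (fun n => F n s) atTop = ENNReal.ofReal (c * s ^ α) :=
    fun s hs => ((ENNReal.continuous_ofReal.tendsto _).comp
      (((hrv s (by linarith [hs.1])).comp hu).const_mul c)).liminf_eq
  have hF_le : ∀ n, ∫⁻ s in Ioc 1 2, F n s ≤
      ∫⁻ s in Ioc 1 2, ENNReal.ofReal (u n * g (s * u n) / ∫ t in (1 : ℝ)..u n, g t) := by
    intro n
    refine setLIntegral_mono' measurableSet_Ioc fun s hs => ENNReal.ofReal_le_ofReal ?_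
    rw [rescaled_eq_ratio_mul (hpos _ (hu1 n).le).ne']
    exact mul_le_mul_of_nonneg_right (hcu n)
      (div_nonneg (hpos _ (by nlinarith [hs.1, hu1 n])).le (hpos _ (hu1 n).le).le)
  have key : ENNReal.ofReal (c / (α + 1) * (2 ^ (α + 1) - 1)) ≤
      ENNReal.ofReal (2 ^ (α + 1) - 1) :=
    calc ENNReal.ofReal (c / (α + 1) * (2 ^ (α + 1) - 1))
        = ∫⁻ s in Ioc 1 2, ENNReal.ofReal (c * s ^ α) :=
          (lintegral_ofReal_const_mul_rpow hα hc one_le_two).symm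
      _ = ∫⁻ s in Ioc 1 2, liminf (fun n => F n s) atTop :=
          setLIntegral_congr_fun measurableSet_Ioc fun s hs => (hF_lim s hs).symm
      _ ≤ liminf (fun n => ∫⁻ s in Ioc 1 2, F n s) atTop := lintegral_liminf_le hF_meas
      _ ≤ liminf (fun n => ∫⁻ s in Ioc 1 2,
            ENNReal.ofReal (u n * g (s * u n) / ∫ t in (1 : ℝ)..u n, g t)) atTop :=
          liminf_le_liminf (Eventually.of_forall hF_le)
      _ = ENNReal.ofReal (2 ^ (α + 1) - 1) :=
          ((hrv.tendsto_lintegral_rescaled hα hpos hint one_le_two).comp hu).liminf_eq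
  have hm : 0 < (2 : ℝ) ^ (α + 1) - 1 := by
    linarith [Real.one_lt_rpow one_lt_two (show 0 < α + 1 by linarith)]
  rwa [ENNReal.ofReal_le_ofReal_iff hm.le, mul_le_iff_le_one_left hm,
    div_le_one (by linarith)] at key

theorem add_one_le_of_ratio_le_seq (hrv : IsRegularlyVarying g α) (hα : -1 < α)
    (hpos : ∀ r ≥ (1 : ℝ), 0 < g r) (hmeas : Measurable g)
    (hint : ∀ x ≥ (1 : ℝ), IntervalIntegrable g volume 1 x)
    {u : ℕ → ℝ} (hu : Tendsto u atTop atTop) (hu1 : ∀ n, 1 < u n) {c K : ℝ}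
    (hdom : ∀ n, ∀ s ∈ Ioc (1 : ℝ) 2, u n * g (s * u n) / (∫ t in (1 : ℝ)..u n, g t) ≤ K)
    (hcu : ∀ n, u n * g (u n) / ∫ t in (1 : ℝ)..u n, g t ≤ c) : α + 1 ≤ c := by
  have hc : 0 ≤ c := le_trans (div_nonneg (mul_nonneg (by linarith [hu1 0])
    (hpos _ (hu1 0).le).le) (integral_one_pos hpos hint (hu1 0)).le) (hcu 0)
  set F : ℕ → ℝ → ENNReal := fun n s =>
    ENNReal.ofReal (u n * g (s * u n) / ∫ t in (1 : ℝ)..u n, g t)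
  have hF_meas : ∀ n, Measurable (F n) := fun n => by fun_prop
  have hF_limsup : ∀ s ∈ Ioc (1 : ℝ) 2,
      limsup (fun n => F n s) atTop ≤ ENNReal.ofReal (c * s ^ α) := by
    intro s hs
    refine (limsup_le_limsup (Eventually.of_forall fun n => ?_)).trans_eq
      ((ENNReal.continuous_ofReal.tendsto _).comp
        (((hrv s (by linarith [hs.1])).comp hu).const_mul c)).limsup_eq
    refine ENNReal.ofReal_le_ofReal ?_
    rw [rescaled_eq_ratio_mul (hpos _ (hu1 n).le).ne']
    exact mul_le_mul_of_nonneg_right (hcu n)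
      (div_nonneg (hpos _ (by nlinarith [hs.1, hu1 n])).le (hpos _ (hu1 n).le).le)
  have hF_bound : ∀ n, F n ≤ᵐ[volume.restrict (Ioc 1 2)] fun _ => ENNReal.ofReal K := fun n =>
    ae_restrict_of_forall_mem measurableSet_Ioc fun s hs => ENNReal.ofReal_le_ofReal (hdom n s hs)
  have hK_fin : ∫⁻ _ in Ioc (1 : ℝ) 2, ENNReal.ofReal K ≠ ⊤ := by
    rw [setLIntegral_const]
    exact ENNReal.mul_ne_top ENNReal.ofReal_ne_top measure_Ioc_lt_top.ne
  have key : ENNReal.ofReal (2 ^ (α + 1) - 1) ≤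
      ENNReal.ofReal (c / (α + 1) * (2 ^ (α + 1) - 1)) :=
    calc ENNReal.ofReal (2 ^ (α + 1) - 1)
        = limsup (fun n => ∫⁻ s in Ioc 1 2, F n s) atTop :=
          ((hrv.tendsto_lintegral_rescaled hα hpos hint one_le_two).comp hu).limsup_eq.symm
      _ ≤ ∫⁻ s in Ioc 1 2, limsup (fun n => F n s) atTop :=
          limsup_lintegral_le _ hF_meas hF_bound hK_fin
      _ ≤ ∫⁻ s in Ioc 1 2, ENNReal.ofReal (c * s ^ α) :=
          setLIntegral_mono' measurableSet_Ioc hF_limsup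
      _ = ENNReal.ofReal (c / (α + 1) * (2 ^ (α + 1) - 1)) :=
          lintegral_ofReal_const_mul_rpow hα hc one_le_two
  have hm : 0 < (2 : ℝ) ^ (α + 1) - 1 := by
    linarith [Real.one_lt_rpow one_lt_two (show 0 < α + 1 by linarith)]
  rwa [ENNReal.ofReal_le_ofReal_iff (mul_nonneg (div_nonneg hc (by linarith)) hm.le),
    le_mul_iff_one_le_left hm, one_le_div (by linarith)] at key

theorem eventually_rescaled_le (hrv : IsRegularlyVarying g α) (hα : -1 < α)
    (hpos : ∀ r ≥ (1 : ℝ), 0 < g r) (hint : ∀ x ≥ (1 : ℝ), IntervalIntegrable g volume 1 x)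
    {M : ℝ} (hM : ∀ᶠ x in atTop, x * g x / (∫ t in (1 : ℝ)..x, g t) ≤ M) :
    ∃ K, ∀ᶠ x in atTop, ∀ s ∈ Ioc (1 : ℝ) 2,
      x * g (s * x) / (∫ t in (1 : ℝ)..x, g t) ≤ K := by
  set G := fun x => ∫ t in (1 : ℝ)..x, g t
  obtain ⟨T, hT⟩ := eventually_atTop.1 hM
  refine ⟨M * (2 ^ (α + 1) + 1), ?_⟩
  filter_upwards [eventually_ge_atTop T, eventually_gt_atTop 1,
    (hrv.tendsto_integral_comp_mul_div hα hpos hint one_le_two).eventually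
      (gt_mem_nhds (lt_add_one _))] with x hxT hx1 hratio
  intro s hs
  have hsx : x ≤ s * x := le_mul_of_one_le_left (by linarith) hs.1.le
  have hgsx := hpos (s * x) (by linarith)
  have hGx := integral_one_pos hpos hint hx1
  have hGsx := integral_one_pos hpos hint (hx1.trans_le hsx)
  have hR := hT (s * x) (hxT.trans hsx)
  have hM0 : 0 ≤ M := le_trans (div_nonneg (mul_nonneg (by linarith) hgsx.le) hGsx.le) hR
  calc x * g (s * x) / G x ≤ s * x * g (s * x) / G x := by gcongr
    _ = s * x * g (s * x) / G (s * x) * (G (s * x) / G x) := (div_mul_div_cancel₀ hGsx.ne').symm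
    _ ≤ M * (G (2 * x) / G x) := by
      gcongr
      exact (strictMonoOn_integral_one hpos hint).monotoneOn (mem_Ici.2 (by linarith))
        (mem_Ici.2 (by linarith)) (by nlinarith [hs.2])
    _ ≤ M * (2 ^ (α + 1) + 1) := by gcongr

theorem eventually_ratio_lt (hrv : IsRegularlyVarying g α) (hα : -1 < α)
    (hpos : ∀ r ≥ (1 : ℝ), 0 < g r) (hmeas : Measurable g)
    (hint : ∀ x ≥ (1 : ℝ), IntervalIntegrable g volume 1 x) {c : ℝ} (hc : α + 1 < c) :
    ∀ᶠ x in atTop, x * g x / (∫ t in (1 : ℝ)..x, g t) < c := by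
  by_contra h
  obtain ⟨u, hu, hcu⟩ := exists_seq_forall_of_frequently
    ((not_eventually.1 h).and_eventually (eventually_gt_atTop 1))
  exact hc.not_ge (hrv.le_add_one_of_le_ratio_seq hα hpos hmeas hint hu (fun n => (hcu n).2)
    (by linarith) fun n => not_lt.1 (hcu n).1)

theorem eventually_lt_ratio (hrv : IsRegularlyVarying g α) (hα : -1 < α)
    (hpos : ∀ r ≥ (1 : ℝ), 0 < g r) (hmeas : Measurable g)
    (hint : ∀ x ≥ (1 : ℝ), IntervalIntegrable g volume 1 x) {c : ℝ} (hc : c < α + 1) :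
    ∀ᶠ x in atTop, c < x * g x / (∫ t in (1 : ℝ)..x, g t) := by
  obtain ⟨K, hK⟩ := hrv.eventually_rescaled_le hα hpos hint
    ((hrv.eventually_ratio_lt hα hpos hmeas hint (lt_add_one (α + 1))).mono fun _ h => h.le)
  by_contra h
  obtain ⟨u, hu, hcu⟩ := exists_seq_forall_of_frequently
    (((not_eventually.1 h).and_eventually (eventually_gt_atTop 1)).and_eventually hK)
  exact hc.not_ge (hrv.add_one_le_of_ratio_le_seq hα hpos hmeas hint hu (fun n => (hcu n).1.2)
    (fun n => (hcu n).2) fun n => not_lt.1 (hcu n).1.1)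

end IsRegularlyVarying

/-- Karamata's theorem on asymptotic integration (direct half): if `g` is positive on
`[1,∞)`, measurable, locally integrable, and regularly varying with index `α > −1`,
then `x·g(x) / ∫_1^x g(t) dt → α + 1` as `x → ∞`. -/
theorem karamata_direct
    (g : ℝ → ℝ) (α : ℝ) (hα : -1 < α)
    (hpos : ∀ r ≥ (1 : ℝ), 0 < g r)
    (hmeas : Measurable g)
    (hint : ∀ x ≥ (1 : ℝ), IntervalIntegrable g volume 1 x)
    (hrv : ∀ lam : ℝ, 0 < lam →
      Tendsto (fun r => g (lam * r) / g r) atTop (nhds (lam ^ α))) :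
    Tendsto (fun x => x * g x / ∫ t in (1 : ℝ)..x, g t) atTop (nhds (α + 1)) := by
  exact tendsto_order.2
    ⟨fun c hc => IsRegularlyVarying.eventually_lt_ratio hrv hα hpos hmeas hint hc,
      fun c hc => IsRegularlyVarying.eventually_ratio_lt hrv hα hpos hmeas hint hc⟩
end

section
/- Let ρ > 0 and let h : [1,∞) → (0,∞) be slowly varying (regularly varying with index 0) and continuous, and define g(r) = r^ρ · h(log r) for large r. Then f(r) := (r / h(log r))^{1/ρ} satisfies g(f(r)) ∼ r as r → ∞, i.e. f is an asymptotic inverse of g. -/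
/-!
Write `k x = log h (eˣ)`, so that slow variation of `h` says `k (x + d) - k x → 0` for each `d`.
By the Baire category theorem this convergence is uniform for `d` near `0`, hence
`h v / h u → 1` whenever `u → ∞` and `v / u → 1`. Summing the case `d = 1` along unit steps
gives `k x = o(x)`, i.e. `log h t = o(t)`. So `log f(r) = (log r - log h (log r)) / ρ` is
asymptotic to `(log r) / ρ`, and `g (f r) / r = h (log f r) / h (log r) → 1`.
-/

open Filter Topology Real

theorem exists_abs_add_sub_le_of_tendsto_add_sub {k : ℝ → ℝ} (hk : Continuous k)
    (hk_shift : ∀ d, Tendsto (fun x => k (x + d) - k x) atTop (𝓝 0)) {ε : ℝ} (hε : 0 < ε) :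
    ∃ δ > 0, ∃ M, ∀ x ≥ M, ∀ c, |c| < δ → |k (x + c) - k x| ≤ 2 * ε := by
  set E : ℕ → Set ℝ := fun N => ⋂ x ∈ Set.Ici (N : ℝ), {d | |k (x + d) - k x| ≤ ε}
  have hE_closed : ∀ N, IsClosed (E N) := fun N =>
    isClosed_biInter fun x _ => isClosed_le (by fun_prop) continuous_const
  have hE_cover : ⋃ N, E N = Set.univ := by
    refine Set.eq_univ_of_forall fun d => ?_
    have hd := (hk_shift d).eventually (Metric.closedBall_mem_nhds 0 hε)
    simp only [dist_zero_right, Real.norm_eq_abs] at hd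
    obtain ⟨X, hX⟩ := eventually_atTop.1 hd
    exact Set.mem_iUnion.2 ⟨⌈X⌉₊, Set.mem_iInter₂.2 fun x hx => hX x ((Nat.le_ceil X).trans hx)⟩
  obtain ⟨N, d₀, hd₀⟩ := nonempty_interior_of_iUnion_of_closed hE_closed hE_cover
  obtain ⟨δ, hδ, hball⟩ := Metric.isOpen_iff.1 isOpen_interior d₀ hd₀
  have hE : ∀ d ∈ Metric.ball d₀ δ, ∀ y ≥ (N : ℝ), |k (y + d) - k y| ≤ ε := fun d hd y hy =>
    Set.mem_iInter₂.1 (interior_subset (hball hd)) y hy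
  refine ⟨δ, hδ, N + d₀, fun x hx c hc => ?_⟩
  -- compare both `k (x + c)` and `k x` with `k (x - d₀)`
  have h₁ := hE (d₀ + c) (by simpa [Real.dist_eq] using hc) (x - d₀) (by linarith)
  have h₂ := hE d₀ (Metric.mem_ball_self hδ) (x - d₀) (by linarith)
  rw [show x - d₀ + (d₀ + c) = x + c by ring] at h₁
  rw [sub_add_cancel] at h₂
  calc |k (x + c) - k x| = |(k (x + c) - k (x - d₀)) - (k x - k (x - d₀))| := by ring_nf
    _ ≤ |k (x + c) - k (x - d₀)| + |k x - k (x - d₀)| := abs_sub _ _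
    _ ≤ 2 * ε := by linarith

theorem tendsto_add_sub_atTop_prod_nhds_zero {k : ℝ → ℝ} (hk : Continuous k)
    (hk_shift : ∀ d, Tendsto (fun x => k (x + d) - k x) atTop (𝓝 0)) :
    Tendsto (fun p : ℝ × ℝ => k (p.1 + p.2) - k p.1) (atTop ×ˢ 𝓝 0) (𝓝 0) := by
  refine Metric.tendsto_nhds.2 fun ε hε => ?_
  obtain ⟨δ, hδ, M, hM⟩ :=
    exists_abs_add_sub_le_of_tendsto_add_sub hk hk_shift (by positivity : 0 < ε / 3)
  filter_upwards [(eventually_ge_atTop M).prod_mk (Metric.ball_mem_nhds 0 hδ)] with ⟨x, c⟩ ⟨hx, hc⟩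
  rw [Real.dist_0_eq_abs]
  have := hM x hx c (by simpa using hc)
  linarith

theorem isLittleO_id_of_tendsto_add_one_sub {u : ℝ → ℝ} (hu : Continuous u)
    (hu_step : Tendsto (fun x => u (x + 1) - u x) atTop (𝓝 0)) :
    u =o[atTop] id := by
  refine Asymptotics.isLittleO_iff.2 fun ε hε => ?_
  have hstep := hu_step.eventually (Metric.closedBall_mem_nhds 0 (half_pos hε))
  simp only [dist_zero_right, Real.norm_eq_abs] at hstep
  obtain ⟨X, hX⟩ := eventually_atTop.1 hstep
  obtain ⟨M, hM⟩ :=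
    isCompact_Icc.exists_bound_of_continuousOn (hu.continuousOn (s := Set.Icc X (X + 1)))
  have hiter : ∀ n : ℕ, ∀ s ∈ Set.Icc X (X + 1), |u (s + n)| ≤ M + n * (ε / 2) := by
    intro n
    induction n with
    | zero => intro s hs; simpa using hM s hs
    | succ n ih =>
      intro s hs
      have := hX (s + n) (by linarith [hs.1, n.cast_nonneg (α := ℝ)])
      rw [Nat.cast_succ, ← add_assoc]
      linarith [abs_sub_abs_le_abs_sub (u (s + n + 1)) (u (s + n)), ih s hs]
  have hbound : ∀ x ≥ X, |u x| ≤ M + (x - X) * (ε / 2) := by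
    intro x hx
    set n := ⌊x - X⌋₊
    have hn_le : (n : ℝ) ≤ x - X := Nat.floor_le (by linarith)
    have hn_gt : x - X < n + 1 := Nat.lt_floor_add_one _
    have := hiter n (x - n) ⟨by linarith, by linarith⟩
    rw [sub_add_cancel] at this
    nlinarith
  filter_upwards [eventually_ge_atTop X, eventually_ge_atTop 0,
    eventually_ge_atTop ((2 * M - X * ε) / ε)] with x hxX hx0 hxM
  rw [div_le_iff₀ hε] at hxM
  rw [Real.norm_eq_abs, id, Real.norm_of_nonneg hx0]
  nlinarith [hbound x hxX]

def IsSlowlyVarying (h : ℝ → ℝ) : Prop :=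
  ∀ lam : ℝ, 0 < lam → Tendsto (fun r => h (lam * r) / h r) atTop (𝓝 1)

namespace IsSlowlyVarying

variable {h : ℝ → ℝ}

theorem tendsto_log_exp_add_sub (hh : IsSlowlyVarying h) (hpos : ∀ x, 0 < h x) (d : ℝ) :
    Tendsto (fun x => log (h (exp (x + d))) - log (h (exp x))) atTop (𝓝 0) := by
  have := ((hh (exp d) (exp_pos d)).comp tendsto_exp_atTop).log one_ne_zero
  rw [log_one] at this
  refine this.congr fun x => ?_
  rw [Function.comp_apply, log_div (hpos _).ne' (hpos _).ne', ← exp_add, add_comm]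

theorem tendsto_div_of_tendsto_div_one (hh : IsSlowlyVarying h) (hpos : ∀ x, 0 < h x)
    (hcont : Continuous h) {α : Type*} {l : Filter α} {u v : α → ℝ} (hu : Tendsto u l atTop)
    (hv : Tendsto (fun x => v x / u x) l (𝓝 1)) :
    Tendsto (fun x => h (v x) / h (u x)) l (𝓝 1) := by
  have hk : Continuous fun x => log (h (exp x)) :=
    (hcont.comp continuous_exp).log fun x => (hpos _).ne'
  have hlim := (tendsto_add_sub_atTop_prod_nhds_zero hk (hh.tendsto_log_exp_add_sub hpos)).comp
    ((tendsto_log_atTop.comp hu).prodMk (by simpa using hv.log one_ne_zero))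
  have hexp : Tendsto (fun x => exp (log (h (exp (log (u x) + log (v x / u x)))) -
      log (h (exp (log (u x)))))) l (𝓝 1) := by simpa using hlim.rexp
  refine hexp.congr' ?_
  filter_upwards [hu.eventually_gt_atTop 0, hv.eventually (eventually_gt_nhds one_pos)]
    with x hux hvx
  have hvx' : 0 < v x := by simpa [hux] using mul_pos hvx hux
  simp only [exp_sub, exp_add, exp_log hux, exp_log (div_pos hvx' hux),
    mul_div_cancel₀ _ hux.ne', exp_log (hpos _)]

theorem tendsto_comp_div_of_tendsto_div (hh : IsSlowlyVarying h) (hpos : ∀ x, 0 < h x)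
    (hcont : Continuous h) {v : ℝ → ℝ} {c : ℝ} (hc : 0 < c)
    (hv : Tendsto (fun t => v t / t) atTop (𝓝 c)) :
    Tendsto (fun t => h (v t) / h t) atTop (𝓝 1) := by
  have hv' : Tendsto (fun t => v t / (c * t)) atTop (𝓝 1) := by
    have := hv.div_const c
    rw [div_self hc.ne'] at this
    refine this.congr fun t => ?_
    rw [mul_comm, div_div]
  have := (hh.tendsto_div_of_tendsto_div_one hpos hcont (tendsto_id.const_mul_atTop hc) hv').mul
    (hh c hc)
  rw [mul_one] at this
  exact this.congr fun t => div_mul_div_cancel₀ (hpos _).ne'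

theorem isLittleO_log_id (hh : IsSlowlyVarying h) (hpos : ∀ x, 0 < h x) (hcont : Continuous h) :
    (fun t => log (h t)) =o[atTop] id := by
  have hk := isLittleO_id_of_tendsto_add_one_sub
    ((hcont.comp continuous_exp).log fun x => (hpos _).ne') (hh.tendsto_log_exp_add_sub hpos 1)
  refine ((hk.comp_tendsto tendsto_log_atTop).trans isLittleO_log_id_atTop).congr' ?_ .rfl
  filter_upwards [eventually_gt_atTop 0] with t ht
  simp [exp_log ht]

end IsSlowlyVarying

/-- Asymptotic inverse of `g(r) = r^ρ · h(log r)` for slowly varying `h`: the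
function `f(r) = (r / h(log r))^(1/ρ)` satisfies `g (f r) ∼ r` as `r → ∞`. -/
theorem asymptotic_inverse_power_slow
    (ρ : ℝ) (hρ : 0 < ρ) (h : ℝ → ℝ)
    (hpos : ∀ x, 0 < h x) (hcont : Continuous h)
    (hslow : ∀ lam : ℝ, 0 < lam →
      Tendsto (fun r => h (lam * r) / h r) atTop (nhds 1))
    (f : ℝ → ℝ)
    (hf : ∀ r, f r = (r / h (Real.log r)) ^ (1 / ρ)) :
    Tendsto (fun r => ((f r) ^ ρ * h (Real.log (f r))) / r) atTop (nhds 1) := by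
  have hh : IsSlowlyVarying h := hslow
  have hv : Tendsto (fun t => (t - log (h t)) / ρ / t) atTop (𝓝 (1 / ρ)) := by
    have := ((hh.isLittleO_log_id hpos hcont).tendsto_div_nhds_zero.const_sub 1).div_const ρ
    rw [sub_zero] at this
    refine this.congr' ?_
    filter_upwards [eventually_gt_atTop 0] with t ht
    rw [id]
    field_simp
  refine ((hh.tendsto_comp_div_of_tendsto_div hpos hcont (one_div_pos.2 hρ) hv).comp
    tendsto_log_atTop).congr' ?_
  filter_upwards [eventually_gt_atTop 0] with r hr
  have hb : 0 < r / h (log r) := div_pos hr (hpos _)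
  rw [hf, ← rpow_mul hb.le, one_div_mul_cancel hρ.ne', rpow_one, log_rpow hb,
    log_div hr.ne' (hpos _).ne', Function.comp_apply]
  field_simp
end
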